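/- Let T > 0, let b : ℝ^d → ℝ^d be continuously differentiable, let k : ℝ^d → ℝ, and let p : [0,T] × ℝ^d → (0,∞) be C¹ in t and C² in x, satisfying the Fokker–Planck equation with killing: ∂_t p_t(x) = −div(b·p_t)(x) + (1/2)Δp_t(x) − k(x)p_t(x) for all (t,x) ∈ [0,T] × ℝ^d. Then the time-reversed density q_t := p_{T−t} satisfies ∂_t q_t(x) = −div( (−b + ∇ log q_t)·q_t )(x) + (1/2)Δ q_t(x) + k(x) q_t(x) for all (t,x) ∈ [0,T] × ℝ^d. -/

import Mathlib

/-!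
Reversing time flips the sign of every term of the forward equation: `−k p` becomes `+k q`, but
`+½Δp` becomes `−½Δq`. The score drift accounts for the latter, since `q ∇log q = ∇q` gives
`−div(q ∇log q) + ½Δq = −Δq + ½Δq = −½Δq`.
-/

open Set InnerProductSpace

noncomputable section

/-- Laplacian of `f : ℝ^d → ℝ` at `x`, computed as the trace of the second derivative. -/
def lap {d : ℕ} (f : EuclideanSpace ℝ (Fin d) → ℝ) (x : EuclideanSpace ℝ (Fin d)) : ℝ :=
  ∑ i, fderiv ℝ (fderiv ℝ f) x (EuclideanSpace.single i 1) (EuclideanSpace.single i 1)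

/-- Divergence of a vector field `v : ℝ^d → ℝ^d` at `x`. -/
def divg {d : ℕ} (v : EuclideanSpace ℝ (Fin d) → EuclideanSpace ℝ (Fin d))
    (x : EuclideanSpace ℝ (Fin d)) : ℝ :=
  ∑ i, fderiv ℝ v x (EuclideanSpace.single i 1) i

section Gradient

variable {F : Type*} [NormedAddCommGroup F] [InnerProductSpace ℝ F] [CompleteSpace F]
  {f : F → ℝ} {x : F}

theorem smul_gradient_log (hf : DifferentiableAt ℝ f x) (hx : f x ≠ 0) :
    f x • gradient (fun y => Real.log (f y)) x = gradient f x := by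
  simp only [gradient, (hf.hasFDerivAt.log hx).fderiv, map_smul, smul_inv_smul₀ hx]

theorem hasFDerivAt_gradient (h : DifferentiableAt ℝ (fderiv ℝ f) x) :
    HasFDerivAt (gradient f)
      (((toDual ℝ F).symm.toContinuousLinearEquiv.toContinuousLinearMap :
        StrongDual ℝ F →L[ℝ] F).comp (fderiv ℝ (fderiv ℝ f) x)) x :=
  ContinuousLinearMap.hasFDerivAt
    ((toDual ℝ F).symm.toContinuousLinearEquiv.toContinuousLinearMap : StrongDual ℝ F →L[ℝ] F)
    |>.comp x h.hasFDerivAt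

end Gradient

theorem EuclideanSpace.toDual_symm_apply_eq_apply_single {ι : Type*} [Fintype ι] [DecidableEq ι]
    (w : StrongDual ℝ (EuclideanSpace ℝ ι)) (i : ι) :
    (toDual ℝ (EuclideanSpace ℝ ι)).symm w i = w (EuclideanSpace.single i 1) := by
  rw [← toDual_symm_apply, EuclideanSpace.inner_single_right, one_mul]
  rfl

section Divergence

variable {d : ℕ}

theorem divg_add {v w : EuclideanSpace ℝ (Fin d) → EuclideanSpace ℝ (Fin d)}
    {x : EuclideanSpace ℝ (Fin d)} (hv : DifferentiableAt ℝ v x) (hw : DifferentiableAt ℝ w x) :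
    divg (fun y => v y + w y) x = divg v x + divg w x := by
  simp only [divg, fderiv_fun_add hv hw, add_apply, PiLp.add_apply, Finset.sum_add_distrib]

theorem divg_neg (v : EuclideanSpace ℝ (Fin d) → EuclideanSpace ℝ (Fin d))
    (x : EuclideanSpace ℝ (Fin d)) :
    divg (fun y => -v y) x = -divg v x := by
  simp only [divg, fderiv_fun_neg, neg_apply, PiLp.neg_apply, Finset.sum_neg_distrib]

theorem divg_gradient {f : EuclideanSpace ℝ (Fin d) → ℝ} {x : EuclideanSpace ℝ (Fin d)}
    (h : DifferentiableAt ℝ (fderiv ℝ f) x) :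
    divg (gradient f) x = lap f x := by
  simp only [divg, lap, (hasFDerivAt_gradient h).fderiv, ContinuousLinearMap.comp_apply,
    ContinuousLinearEquiv.coe_coe, LinearIsometryEquiv.coe_toContinuousLinearEquiv,
    EuclideanSpace.toDual_symm_apply_eq_apply_single]

theorem divg_smul_neg_add_gradient_log {f : EuclideanSpace ℝ (Fin d) → ℝ}
    {b : EuclideanSpace ℝ (Fin d) → EuclideanSpace ℝ (Fin d)} {x : EuclideanSpace ℝ (Fin d)}
    (hf : Differentiable ℝ f) (hf' : DifferentiableAt ℝ (fderiv ℝ f) x) (hf0 : ∀ y, f y ≠ 0)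
    (hb : DifferentiableAt ℝ b x) :
    divg (fun y => f y • (-b y + gradient (fun z => Real.log (f z)) y)) x
      = -divg (fun y => f y • b y) x + lap f x := by
  have hfield : (fun y => f y • (-b y + gradient (fun z => Real.log (f z)) y))
      = fun y => -(f y • b y) + gradient f y := by
    ext1 y
    rw [smul_add, smul_neg, smul_gradient_log (hf y) (hf0 y)]
  rw [hfield, divg_add (v := fun y => -(f y • b y)) ((hf x).smul hb).neg
    (hasFDerivAt_gradient hf').differentiableAt, divg_neg, divg_gradient hf']

end Divergence

theorem fokker_planck_time_reversal {d : ℕ} (T : ℝ)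
    (b : EuclideanSpace ℝ (Fin d) → EuclideanSpace ℝ (Fin d)) (hb : ContDiff ℝ 1 b)
    (k : EuclideanSpace ℝ (Fin d) → ℝ)
    (p : ℝ → EuclideanSpace ℝ (Fin d) → ℝ)
    (hpos : ∀ t ∈ Icc (0:ℝ) T, ∀ x, 0 < p t x)
    (hp2 : ∀ t ∈ Icc (0:ℝ) T, ContDiff ℝ 2 (p t))
    (hFP : ∀ t ∈ Icc (0:ℝ) T, ∀ x, HasDerivAt (fun s => p s x)
      (-divg (fun y => p t y • b y) x + (1 / 2) * lap (p t) x - k x * p t x) t) :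
    ∀ t ∈ Icc (0:ℝ) T, ∀ x, HasDerivAt (fun s => p (T - s) x)
      (-divg (fun y =>
          p (T - t) y • (-b y + gradient (fun z => Real.log (p (T - t) z)) y)) x
        + (1 / 2) * lap (p (T - t)) x + k x * p (T - t) x) t := by
  intro t ht x
  have hτ : T - t ∈ Icc (0:ℝ) T := ⟨by linarith [ht.2], by linarith [ht.1]⟩
  have hp := hp2 _ hτ
  have hdrift := divg_smul_neg_add_gradient_log (hp.differentiable two_ne_zero)
    ((hp.fderiv_right (m := 1) (by norm_num)).differentiable one_ne_zero x)
    (fun y => (hpos _ hτ y).ne') (hb.differentiable one_ne_zero x)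
  refine ((hFP _ hτ x).comp_const_sub T t).congr_deriv ?_
  rw [hdrift]
  ring
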